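/- Let A be a nontrivial commutative ring, R = A[X] the polynomial ring in one indeterminate, graded by ℤ with deg(X) = 1 (ψ = id : ℤ → ℤ), and H = 2ℤ ≤ ℤ, so that S = R_(H) is the A-subalgebra of R spanned by the even powers of X. Let 𝔞 = ⟨X⁴⟩_R and 𝔟 = ⟨X²⟩_R. Then ⌊𝔞⌋ = ⟨X⟩_R = ⌊𝔟⌋, while ⌊𝔞⌋_H = ⟨X⁴⟩_S is strictly contained in ⟨X²⟩_S = ⌊𝔟⌋_H; in particular ⌊𝔞⌋_H ≠ ⌊𝔟⌋_H, so the converse of Proposition 2.40 b) fails. (Counterexample following Proposition 2.40.) -/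

import Mathlib

set_option synthInstance.maxHeartbeats 1000000
set_option maxHeartbeats 1000000

open MvPolynomial

/-- `suppInd μ` is the characteristic function of the support of `μ`,
so that `X^(suppInd μ) = ∏_{i : μ i > 0} X i`. -/
noncomputable def suppInd {I : Type v} (μ : I →₀ ℕ) : I →₀ ℕ :=
  μ.mapRange (fun n => if n = 0 then 0 else 1) (by simp)

/-- The canonical embedding `ℕ^(⊕I) → ℤ^(⊕I)`. -/
noncomputable def natToInt {I : Type v} (μ : I →₀ ℕ) : I →₀ ℤ :=
  Finsupp.mapRange (Nat.cast : ℕ → ℤ) Nat.cast_zero μ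

/-- A monomial ideal of `A[(X_i)_{i ∈ I}]` is an ideal generated by a set of monomials. -/
def IsMonomialIdeal {A : Type u} [CommRing A] {I : Type v}
    (𝔞 : Ideal (MvPolynomial I A)) : Prop :=
  ∃ E : Set (I →₀ ℕ), 𝔞 = Ideal.span ((fun μ => monomial μ (1 : A)) '' E)

/-- `⌊𝔞⌋` is the ideal generated by the monomials `X^(suppInd μ)` for all monomials
`X^μ ∈ 𝔞`. -/
noncomputable def mvFloor {A : Type u} [CommRing A] {I : Type v}
    (𝔞 : Ideal (MvPolynomial I A)) : Ideal (MvPolynomial I A) :=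
  Ideal.span {f | ∃ μ : I →₀ ℕ, monomial μ (1 : A) ∈ 𝔞 ∧ f = monomial (suppInd μ) (1 : A)}

/-- The degree restriction `S = R_(H)` of `R = A[(X_i)_{i ∈ I}]` (graded via
`ψ : ℤ^(⊕I) → G`) to a subgroup `H ≤ G`: the `A`-subalgebra of `R` generated by the
monomials `X^μ` whose degree `ψ(μ)` lies in `H`. -/
noncomputable def degRestrict (A : Type u) [CommRing A] {I : Type v} {G : Type w} [AddCommGroup G]
    (ψ : (I →₀ ℤ) →+ G) (H : AddSubgroup G) : Subalgebra A (MvPolynomial I A) :=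
  Algebra.adjoin A {f | ∃ μ : I →₀ ℕ, ψ (natToInt μ) ∈ H ∧ f = monomial μ (1 : A)}

/-- The degree restriction `𝔠_(H) = 𝔠 ∩ S` of an ideal `𝔠` of `R`, as an ideal of
`S = R_(H)`. -/
noncomputable def idealRestrict {A : Type u} [CommRing A] {I : Type v} {G : Type w} [AddCommGroup G]
    (ψ : (I →₀ ℤ) →+ G) (H : AddSubgroup G) (𝔠 : Ideal (MvPolynomial I A)) :
    Ideal (degRestrict A ψ H) :=
  Ideal.comap (degRestrict A ψ H).val 𝔠

/-- `E(𝔞)`: the set of minimal elements of `{μ ∈ ℕ^(⊕I) | X^μ ∈ 𝔞}` with respect to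
the componentwise order. -/
def Emin {A : Type u} [CommRing A] {I : Type v} (𝔞 : Ideal (MvPolynomial I A)) :
    Set (I →₀ ℕ) :=
  {μ | monomial μ (1 : A) ∈ 𝔞 ∧ ∀ ν : I →₀ ℕ, monomial ν (1 : A) ∈ 𝔞 → ν ≤ μ → ν = μ}

/-- `m_μ`: the least `m ∈ ℕ` such that `X^(m • suppInd μ) ∈ 𝔞_(H) = 𝔞 ∩ S`. -/
noncomputable def mdeg {A : Type u} [CommRing A] {I : Type v} {G : Type w} [AddCommGroup G]
    (ψ : (I →₀ ℤ) →+ G) (H : AddSubgroup G) (𝔞 : Ideal (MvPolynomial I A))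
    (μ : I →₀ ℕ) : ℕ :=
  sInf {m : ℕ | monomial (m • suppInd μ) (1 : A) ∈ 𝔞 ∧
    monomial (m • suppInd μ) (1 : A) ∈ degRestrict A ψ H}

/-- `⌊𝔞⌋_H`: the ideal of `S = R_(H)` generated by the monomials `X^(m_μ • suppInd μ)`
for `μ ∈ E(𝔞)`. -/
noncomputable def floorH {A : Type u} [CommRing A] {I : Type v} {G : Type w} [AddCommGroup G]
    (ψ : (I →₀ ℤ) →+ G) (H : AddSubgroup G) (𝔞 : Ideal (MvPolynomial I A)) :
    Ideal (degRestrict A ψ H) :=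
  Ideal.span {s | ∃ μ ∈ Emin 𝔞,
    (s : MvPolynomial I A) = monomial (mdeg ψ H 𝔞 μ • suppInd μ) (1 : A)}

/-!
Every monomial of `⟨X^n⟩` (`n ≠ 0`) has support `{X}`, so `⌊·⌋` forgets the exponent. In
`S = R_(2ℤ)` only even powers of `X` survive, and for even `n` the least `m` with
`X^m ∈ ⟨X^n⟩ ∩ S` is `n` itself, so `⌊⟨X^n⟩⌋_H = ⟨X^n⟩_S`. Finally `X^2 ∉ X^4 S`, since `X^4` does
not even divide `X^2` in `A[X]`.
-/

variable {A : Type*} [CommRing A] {I : Type*}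

lemma suppInd_apply (μ : I →₀ ℕ) (i : I) : suppInd μ i = if μ i = 0 then 0 else 1 := rfl

lemma suppInd_mono {μ ν : I →₀ ℕ} (h : ν ≤ μ) : suppInd ν ≤ suppInd μ := by
  intro i
  have := h i
  simp only [suppInd_apply]
  split_ifs <;> omega

lemma suppInd_single {i : I} {n : ℕ} (hn : n ≠ 0) :
    suppInd (Finsupp.single i n) = Finsupp.single i 1 := by
  classical
  ext j
  rw [suppInd_apply]
  rcases eq_or_ne i j with rfl | hij
  · simp only [Finsupp.single_eq_same, if_neg hn]
  · simp [hij]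

lemma applyAddHom_natToInt (μ : I →₀ ℕ) (i : I) :
    Finsupp.applyAddHom i (natToInt μ) = (μ i : ℤ) := by
  simp [natToInt]

lemma degRestrict_le_restrictSupport {G : Type*} [AddCommGroup G] (ψ : (I →₀ ℤ) →+ G)
    (H : AddSubgroup G) :
    Subalgebra.toSubmodule (degRestrict A ψ H) ≤ restrictSupport A {μ | ψ (natToInt μ) ∈ H} := by
  intro f hf
  induction hf using Algebra.adjoin_induction with
  | mem f hf =>
    obtain ⟨μ, hμ, rfl⟩ := hf
    simp [hμ]
  | algebraMap a =>
    rw [MvPolynomial.algebraMap_eq, C_apply, monomial_mem_restrictSupport]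
    simp [natToInt]
  | add f g _ _ hf hg => exact Submodule.add_mem _ hf hg
  | mul f g _ _ hf hg =>
    refine restrictSupport_mono A ?_ (restrictSupport_add A _ _ ▸ Submodule.mul_mem_mul hf hg)
    rintro _ ⟨μ, hμ, ν, hν, rfl⟩
    simpa [natToInt, Finsupp.mapRange_add] using H.add_mem hμ hν

section Nontrivial

variable [Nontrivial A]

lemma monomial_mem_degRestrict_iff {G : Type*} [AddCommGroup G] {ψ : (I →₀ ℤ) →+ G}
    {H : AddSubgroup G} {μ : I →₀ ℕ} :
    monomial μ (1 : A) ∈ degRestrict A ψ H ↔ ψ (natToInt μ) ∈ H := by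
  refine ⟨fun h => ?_, fun h => Algebra.subset_adjoin ⟨μ, h, rfl⟩⟩
  simpa using degRestrict_le_restrictSupport ψ H h

lemma monomial_mem_span_monomial_iff {μ ν : I →₀ ℕ} :
    monomial μ (1 : A) ∈ Ideal.span {monomial ν (1 : A)} ↔ ν ≤ μ := by
  rw [Ideal.mem_span_singleton, monomial_one_dvd_monomial_one]

lemma Emin_span_monomial (ν : I →₀ ℕ) : Emin (Ideal.span {monomial ν (1 : A)}) = {ν} := by
  ext μ
  simp only [Emin, Set.mem_ofPred_eq, Set.mem_singleton_iff, monomial_mem_span_monomial_iff]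
  exact ⟨fun ⟨hνμ, hmin⟩ => (hmin ν le_rfl hνμ).symm,
    by rintro rfl; exact ⟨le_rfl, fun _ h h' => le_antisymm h' h⟩⟩

lemma mvFloor_span_monomial (ν : I →₀ ℕ) :
    mvFloor (Ideal.span {monomial ν (1 : A)}) = Ideal.span {monomial (suppInd ν) (1 : A)} := by
  refine le_antisymm (Ideal.span_le.2 ?_) (Ideal.span_le.2 ?_)
  · rintro _ ⟨μ, hμ, rfl⟩
    rw [monomial_mem_span_monomial_iff] at hμ
    exact monomial_mem_span_monomial_iff.2 (suppInd_mono hμ)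
  · rintro _ rfl
    exact Ideal.subset_span ⟨ν, Ideal.subset_span rfl, rfl⟩

lemma floorH_span_monomial {G : Type*} [AddCommGroup G] (ψ : (I →₀ ℤ) →+ G)
    (H : AddSubgroup G) (ν : I →₀ ℕ) :
    floorH ψ H (Ideal.span {monomial ν (1 : A)}) =
      Ideal.span {s : degRestrict A ψ H | (s : MvPolynomial I A) =
        monomial (mdeg ψ H (Ideal.span {monomial ν (1 : A)}) ν • suppInd ν) 1} := by
  simp only [floorH, Emin_span_monomial, Set.mem_singleton_iff, exists_eq_left]

lemma X_pow_dvd_X_pow_iff {i : I} {m n : ℕ} :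
    (X i : MvPolynomial I A) ^ m ∣ X i ^ n ↔ m ≤ n := by
  rw [X_pow_eq_monomial, X_pow_eq_monomial, monomial_one_dvd_monomial_one, Finsupp.single_le_single]

lemma mvFloor_span_X_pow {i : I} {n : ℕ} (hn : n ≠ 0) :
    mvFloor (Ideal.span {(X i : MvPolynomial I A) ^ n}) = Ideal.span {X i} := by
  rw [X_pow_eq_monomial, mvFloor_span_monomial, suppInd_single hn, ← X_pow_eq_monomial, pow_one]

lemma X_pow_mem_degRestrict_iff_even {i : I} {n : ℕ} :
    (X i : MvPolynomial I A) ^ n ∈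
      degRestrict A (Finsupp.applyAddHom i) (AddSubgroup.zmultiples 2) ↔ Even n := by
  rw [X_pow_eq_monomial, monomial_mem_degRestrict_iff, applyAddHom_natToInt,
    Finsupp.single_eq_same, Int.mem_zmultiples_iff, even_iff_two_dvd]
  omega

lemma mdeg_span_X_pow {i : I} {n : ℕ} (hn : n ≠ 0) (he : Even n) :
    mdeg (Finsupp.applyAddHom i) (AddSubgroup.zmultiples 2)
      (Ideal.span {(X i : MvPolynomial I A) ^ n}) (Finsupp.single i n) = n := by
  have hset : {m : ℕ | monomial (m • suppInd (Finsupp.single i n)) (1 : A) ∈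
        Ideal.span {(X i : MvPolynomial I A) ^ n} ∧
      monomial (m • suppInd (Finsupp.single i n)) (1 : A) ∈
        degRestrict A (Finsupp.applyAddHom i) (AddSubgroup.zmultiples 2)} =
      {m | n ≤ m ∧ Even m} := by
    ext m
    rw [Set.mem_ofPred_eq, Set.mem_ofPred_eq, suppInd_single hn, Finsupp.smul_single, smul_eq_mul,
      mul_one, ← X_pow_eq_monomial, Ideal.mem_span_singleton, X_pow_dvd_X_pow_iff,
      X_pow_mem_degRestrict_iff_even]
  rw [mdeg, hset]
  exact le_antisymm (Nat.sInf_le ⟨le_rfl, he⟩) (le_csInf ⟨n, le_rfl, he⟩ fun _ h => h.1)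

lemma floorH_span_X_pow {i : I} {n : ℕ} (hn : n ≠ 0) (he : Even n) :
    floorH (Finsupp.applyAddHom i) (AddSubgroup.zmultiples 2)
        (Ideal.span {(X i : MvPolynomial I A) ^ n}) =
      Ideal.span {s : degRestrict A (Finsupp.applyAddHom i) (AddSubgroup.zmultiples 2) |
        (s : MvPolynomial I A) = X i ^ n} := by
  have h := floorH_span_monomial (A := A) (Finsupp.applyAddHom i) (AddSubgroup.zmultiples 2)
    (Finsupp.single i n)
  rw [← X_pow_eq_monomial, mdeg_span_X_pow hn he, suppInd_single hn, Finsupp.smul_single,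
    smul_eq_mul, mul_one, ← X_pow_eq_monomial] at h
  exact h

end Nontrivial

lemma Subalgebra.span_setOf_coe_eq {R : Type*} [CommRing R] [Algebra A R] {S : Subalgebra A R}
    {x : R} (hx : x ∈ S) : Ideal.span {s : S | (s : R) = x} = Ideal.span {⟨x, hx⟩} := by
  congr 1
  ext s
  simp [Subtype.ext_iff]

lemma Ideal.span_singleton_lt_span_singleton_of_map {S R F : Type*} [CommSemiring S] [Semiring R]
    [FunLike F S R] [MulHomClass F S R] (f : F) {a b : S} (hba : b ∣ a) (hab : ¬ f a ∣ f b) :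
    Ideal.span {a} < Ideal.span {b} := by
  rw [lt_iff_le_not_ge, Ideal.span_singleton_le_span_singleton,
    Ideal.span_singleton_le_span_singleton]
  exact ⟨hba, fun h => hab (map_dvd f h)⟩

/-- counterexample following Proposition 2.40: over a nontrivial
ring `A`, for `R = A[X]` graded by `ℤ` with `deg X = 1`, `H = 2ℤ`, `𝔞 = ⟨X⁴⟩` and
`𝔟 = ⟨X²⟩`, one has `⌊𝔞⌋ = ⟨X⟩ = ⌊𝔟⌋`, while `⌊𝔞⌋_H = ⟨X⁴⟩_S` is strictly contained
in `⟨X²⟩_S = ⌊𝔟⌋_H`; in particular the converse of Proposition 2.40 b) fails. -/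
theorem floorH_counterexample {A : Type u} [CommRing A] [Nontrivial A] :
    let ψ : ((Unit →₀ ℤ) →+ ℤ) := Finsupp.applyAddHom ()
    let H : AddSubgroup ℤ := AddSubgroup.zmultiples (2 : ℤ)
    let X : MvPolynomial Unit A := MvPolynomial.X ()
    let 𝔞 : Ideal (MvPolynomial Unit A) := Ideal.span {X ^ 4}
    let 𝔟 : Ideal (MvPolynomial Unit A) := Ideal.span {X ^ 2}
    mvFloor 𝔞 = Ideal.span {X} ∧
    mvFloor 𝔟 = Ideal.span {X} ∧
    floorH ψ H 𝔞 = Ideal.span {s : degRestrict A ψ H | (s : MvPolynomial Unit A) = X ^ 4} ∧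
    floorH ψ H 𝔟 = Ideal.span {s : degRestrict A ψ H | (s : MvPolynomial Unit A) = X ^ 2} ∧
    floorH ψ H 𝔞 < floorH ψ H 𝔟 := by
  intro ψ H X 𝔞 𝔟
  have hfloor𝔞 : floorH ψ H 𝔞 = _ := floorH_span_X_pow (by norm_num) (by decide)
  have hfloor𝔟 : floorH ψ H 𝔟 = _ := floorH_span_X_pow (by norm_num) (by decide)
  refine ⟨mvFloor_span_X_pow (by norm_num), mvFloor_span_X_pow (by norm_num), hfloor𝔞, hfloor𝔟,
    ?_⟩
  have hX2 : X ^ 2 ∈ degRestrict A ψ H := X_pow_mem_degRestrict_iff_even.2 (by decide)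
  have hX4 : X ^ 4 ∈ degRestrict A ψ H := X_pow_mem_degRestrict_iff_even.2 (by decide)
  rw [hfloor𝔞, hfloor𝔟, Subalgebra.span_setOf_coe_eq hX4, Subalgebra.span_setOf_coe_eq hX2]
  refine Ideal.span_singleton_lt_span_singleton_of_map (degRestrict A ψ H).val
    ⟨⟨X ^ 2, hX2⟩, Subtype.ext ?_⟩ ?_
  · simp only [Subalgebra.coe_mul]
    ring
  · simpa using X_pow_dvd_X_pow_iff.not.2 (by norm_num : ¬ 4 ≤ 2)
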